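/- arXiv:2108.02856 — 2 statements merged into one kernel-verified Lean document; each statement's English description precedes it below -/
import Mathlib

section
/- Scaled Hölder embedding on balls: let s ∈ (0,1), p ∈ [1,∞) with sp > n. Then there is C = C(n,s,p) > 0 such that for every r > 0, x0 ∈ ℝ^n, and every u ∈ W^{s,p}(B_r(x0)), the Hölder seminorm satisfies [u]_{C^{s−n/p}(B_r(x0))} ≤ C [u]_{W^{s,p}(B_r(x0))}, with constant independent of r and x0. -/
/-!
Campanato's argument. If `A` and `B` are balls of radii comparable to `ρ` inside the domain
whose points are at mutual distance at most a multiple of `ρ`, Jensen's inequality on `A × B`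
bounds `|⨍_A u - ⨍_B u|` by `((|A| |B|)⁻¹ ∫_A ∫_B |u a - u b|^p)^{1/p}`, and inserting the weight
`|a - b|^{-(n + s p)} ≳ ρ^{-(n + s p)}` turns this into `≲ ρ^{s - n/p} [u]_{W^{s,p}}`. For
`x, y ∈ B_r(x₀)` at distance `d`, compare `u(x)` with the average over a ball of radius `d/4` lying
in `B_d(x) ∩ B_r(x₀)` through a chain of such balls of radii `2^{-k} d / 4` shrinking to `x`:
since `s - n/p > 0` the errors form a convergent geometric series, and continuity of `u`
identifies the limit of the averages with `u(x)`. Doing the same at `y` and comparing the two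
starting balls directly gives the estimate; only ratios of radii enter the constant.
-/

open MeasureTheory Metric Set Filter Topology Module
open scoped ENNReal

section Averages

variable {α F : Type*} [MeasurableSpace α] [NormedAddCommGroup F] [NormedSpace ℝ F]

theorem enorm_average_le_laverage_rpow {ν : Measure α} [IsFiniteMeasure ν] [NeZero ν]
    {f : α → F} (hf : AEStronglyMeasurable f ν) {p : ℝ} (hp : 1 ≤ p) :
    ‖⨍ x, f x ∂ν‖ₑ ≤ (⨍⁻ x, ‖f x‖ₑ ^ p ∂ν) ^ (1 / p) := by
  have hp0 : 0 < p := zero_lt_one.trans_le hp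
  rw [average_eq', laverage_eq']
  set ν' := (ν univ)⁻¹ • ν
  calc ‖∫ x, f x ∂ν'‖ₑ ≤ eLpNorm f 1 ν' := by
        rw [eLpNorm_one_eq_lintegral_enorm]; exact enorm_integral_le_lintegral_enorm f
    _ ≤ eLpNorm f (ENNReal.ofReal p) ν' :=
        eLpNorm_le_eLpNorm_of_exponent_le (by simpa using hp) (hf.smul_measure _)
    _ = (∫⁻ x, ‖f x‖ₑ ^ p ∂ν') ^ (1 / p) := by
        rw [eLpNorm_eq_lintegral_rpow_enorm_toReal (by simpa using hp0) ENNReal.ofReal_ne_top,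
          ENNReal.toReal_ofReal hp0.le]

theorem setAverage_sub_setAverage_eq_average_prod {μ : Measure α} {A B : Set α}
    (hA₀ : μ A ≠ 0) (hA : μ A ≠ ∞) (hB₀ : μ B ≠ 0) (hB : μ B ≠ ∞) {u : α → F}
    (huA : IntegrableOn u A μ) (huB : IntegrableOn u B μ) :
    (⨍ a in A, u a ∂μ) - ⨍ b in B, u b ∂μ =
      ⨍ z, (u z.1 - u z.2) ∂(μ.restrict A).prod (μ.restrict B) := by
  have : IsFiniteMeasure (μ.restrict A) := isFiniteMeasure_restrict.2 hA
  have : IsFiniteMeasure (μ.restrict B) := isFiniteMeasure_restrict.2 hB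
  have hA' : μ.real A ≠ 0 := ENNReal.toReal_ne_zero.2 ⟨hA₀, hA⟩
  have hB' : μ.real B ≠ 0 := ENNReal.toReal_ne_zero.2 ⟨hB₀, hB⟩
  rw [average_eq, average_eq, average_eq, integral_sub (huA.comp_fst _) (huB.comp_snd _),
    integral_fun_fst, integral_fun_snd, ← univ_prod_univ, measureReal_prod_prod]
  simp only [measureReal_restrict_apply_univ, smul_sub, smul_smul]
  congr 2 <;> field_simp

theorem enorm_setAverage_sub_setAverage_le {μ : Measure α} {A B : Set α}
    (hA₀ : μ A ≠ 0) (hA : μ A ≠ ∞) (hB₀ : μ B ≠ 0) (hB : μ B ≠ ∞) {u : α → F}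
    (huA : IntegrableOn u A μ) (huB : IntegrableOn u B μ) {p : ℝ} (hp : 1 ≤ p) :
    ‖(⨍ a in A, u a ∂μ) - ⨍ b in B, u b ∂μ‖ₑ ≤
      ((∫⁻ a in A, ∫⁻ b in B, ‖u a - u b‖ₑ ^ p ∂μ ∂μ) / (μ A * μ B)) ^ (1 / p) := by
  have : IsFiniteMeasure (μ.restrict A) := isFiniteMeasure_restrict.2 hA
  have : IsFiniteMeasure (μ.restrict B) := isFiniteMeasure_restrict.2 hB
  set ν := (μ.restrict A).prod (μ.restrict B)
  have hν : ν univ = μ A * μ B := by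
    rw [← univ_prod_univ, Measure.prod_prod, Measure.restrict_apply_univ,
      Measure.restrict_apply_univ]
  have : NeZero ν := ⟨fun h ↦ mul_ne_zero hA₀ hB₀ (by rw [← hν, h]; rfl)⟩
  have hf : AEStronglyMeasurable (fun z : α × α ↦ u z.1 - u z.2) ν :=
    huA.aestronglyMeasurable.comp_fst.sub huB.aestronglyMeasurable.comp_snd
  rw [setAverage_sub_setAverage_eq_average_prod hA₀ hA hB₀ hB huA huB, ← hν,
    ← lintegral_prod _ (hf.enorm.pow_const p)]
  exact (enorm_average_le_laverage_rpow hf hp).trans_eq (by rw [laverage_eq])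

theorem tendsto_setAverage_of_continuousWithinAt {ι : Type*} [PseudoMetricSpace α]
    [CompleteSpace F] {μ : Measure α} {Ω : Set α} {u : α → F} {t : α}
    (hu : ContinuousWithinAt u Ω t)
    {l : Filter ι} {S : ι → Set α} (hS : ∀ i, MeasurableSet (S i)) (hSΩ : ∀ i, S i ⊆ Ω)
    (hS₀ : ∀ i, μ (S i) ≠ 0) (hS_fin : ∀ i, μ (S i) ≠ ∞) (hint : ∀ i, IntegrableOn u (S i) μ)
    (hshrink : ∀ ε > 0, ∀ᶠ i in l, S i ⊆ ball t ε) :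
    Tendsto (fun i ↦ ⨍ x in S i, u x ∂μ) l (𝓝 (u t)) := by
  refine nhds_basis_closedBall.tendsto_right_iff.2 fun ε hε ↦ ?_
  obtain ⟨δ, hδ, hδu⟩ := Metric.continuousWithinAt_iff.1 hu ε hε
  filter_upwards [hshrink δ hδ] with i hi
  refine (convex_closedBall _ _).set_average_mem isClosed_closedBall (hS₀ i) (hS_fin i)
    (ae_restrict_of_forall_mem (hS i) fun x hx ↦ ?_) (hint i)
  exact mem_closedBall.2 (hδu (hSΩ i hx) (hi hx)).le

end Averages

section Gagliardo

variable {E : Type*} [NormedAddCommGroup E] [MeasurableSpace E]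

/-- For `γ = n + s p` on a domain `Ω ⊆ ℝⁿ` this is `[u]_{W^{s,p}(Ω)} ^ p`. -/
noncomputable def gagliardoIntegral (μ : Measure E) (Ω : Set E) (u : E → ℝ) (p γ : ℝ) : ℝ≥0∞ :=
  ∫⁻ a in Ω, ∫⁻ b in Ω, ENNReal.ofReal (|u a - u b| ^ p / ‖a - b‖ ^ γ) ∂μ ∂μ

theorem le_rpow_mul_div_rpow_of_le {x t D γ : ℝ} (hx : 0 ≤ x) (ht : 0 < t) (htD : t ≤ D)
    (hγ : 0 ≤ γ) : x ≤ D ^ γ * (x / t ^ γ) := by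
  have htγ : 0 < t ^ γ := Real.rpow_pos_of_pos ht γ
  rw [mul_div_assoc', le_div_iff₀ htγ, mul_comm]
  exact mul_le_mul_of_nonneg_right (Real.rpow_le_rpow ht.le htD hγ) hx

theorem lintegral_enorm_sub_rpow_le_gagliardoIntegral {μ : Measure E} {Ω A B : Set E}
    (hA : MeasurableSet A) (hB : MeasurableSet B) (hAΩ : A ⊆ Ω) (hBΩ : B ⊆ Ω) {u : E → ℝ}
    {p γ D : ℝ} (hp : 0 < p) (hγ : 0 ≤ γ) (hD : ∀ a ∈ A, ∀ b ∈ B, ‖a - b‖ ≤ D) :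
    ∫⁻ a in A, ∫⁻ b in B, ‖u a - u b‖ₑ ^ p ∂μ ∂μ ≤
      ENNReal.ofReal (D ^ γ) * gagliardoIntegral μ Ω u p γ := by
  have key : ∀ a ∈ A, ∀ b ∈ B, ‖u a - u b‖ₑ ^ p ≤
      ENNReal.ofReal (D ^ γ) * ENNReal.ofReal (|u a - u b| ^ p / ‖a - b‖ ^ γ) := by
    intro a ha b hb
    have hD0 : 0 ≤ D := (norm_nonneg _).trans (hD a ha b hb)
    rw [Real.enorm_eq_ofReal_abs, ENNReal.ofReal_rpow_of_nonneg (abs_nonneg _) hp.le,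
      ← ENNReal.ofReal_mul (by positivity)]
    refine ENNReal.ofReal_le_ofReal ?_
    rcases eq_or_ne a b with rfl | hab
    · simp [Real.zero_rpow hp.ne']
    · exact le_rpow_mul_div_rpow_of_le (by positivity) (norm_sub_pos_iff.2 hab) (hD a ha b hb) hγ
  calc ∫⁻ a in A, ∫⁻ b in B, ‖u a - u b‖ₑ ^ p ∂μ ∂μ
      ≤ ∫⁻ a in A, ENNReal.ofReal (D ^ γ) *
          ∫⁻ b in B, ENNReal.ofReal (|u a - u b| ^ p / ‖a - b‖ ^ γ) ∂μ ∂μ := by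
        refine setLIntegral_mono' hA fun a ha ↦ ?_
        rw [← lintegral_const_mul' _ _ ENNReal.ofReal_ne_top]
        exact setLIntegral_mono' hB (key a ha)
    _ ≤ ENNReal.ofReal (D ^ γ) * gagliardoIntegral μ Ω u p γ := by
        rw [lintegral_const_mul' _ _ ENNReal.ofReal_ne_top, gagliardoIntegral]
        gcongr with a

end Gagliardo

-- The powers of `ρ` collect into `ρ ^ (s - n / p)`: this is where scale invariance comes from.
theorem rpow_scaling {n : ℕ} {s p κ ρ V W G : ℝ} (hp : 0 < p) (hκ : 0 ≤ κ) (hρ : 0 < ρ)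
    (hV : 0 < V) (hW : 0 < W) (hG : 0 ≤ G) :
    ((κ * ρ) ^ ((n : ℝ) + s * p) * G / (ρ ^ n * V * (ρ ^ n * W))) ^ (1 / p) =
      (κ ^ ((n : ℝ) + s * p) / (V * W)) ^ (1 / p) * ρ ^ (s - n / p) * G ^ (1 / p) := by
  have hρα : ρ ^ ((n : ℝ) + s * p) / (ρ ^ n * ρ ^ n) = (ρ ^ (s - n / p)) ^ p := by
    rw [← Real.rpow_natCast, ← Real.rpow_add hρ, ← Real.rpow_sub hρ, ← Real.rpow_mul hρ.le]
    congr 1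
    field_simp
    ring
  have : (κ * ρ) ^ ((n : ℝ) + s * p) * G / (ρ ^ n * V * (ρ ^ n * W)) =
      κ ^ ((n : ℝ) + s * p) / (V * W) * (ρ ^ (s - n / p)) ^ p * G := by
    rw [Real.mul_rpow hκ hρ.le, ← hρα]
    field_simp
  rw [this, Real.mul_rpow (by positivity) hG, Real.mul_rpow (by positivity) (by positivity),
    ← Real.rpow_mul (by positivity), mul_one_div_cancel hp.ne', Real.rpow_one]

section InnerBall

variable {E : Type*} [NormedAddCommGroup E] [NormedSpace ℝ E]

/-- The ball of radius `ρ / 4` about this point lies in both `B_ρ(t)` and `B_r(x₀)` whenever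
`ρ ≤ 2r`. -/
noncomputable def innerCenter (x₀ : E) (r : ℝ) (t : E) (ρ : ℝ) : E :=
  x₀ + (1 - ρ / (2 * r)) • (t - x₀)

variable {x₀ t : E} {r ρ : ℝ}

theorem dist_innerCenter_self_le (ht : t ∈ closedBall x₀ r) (hr : 0 < r) (hρ : 0 ≤ ρ) :
    dist (innerCenter x₀ r t ρ) t ≤ ρ / 2 := by
  have : innerCenter x₀ r t ρ - t = (-(ρ / (2 * r))) • (t - x₀) := by
    rw [innerCenter]; module
  rw [dist_eq_norm, this, norm_smul, norm_neg, Real.norm_of_nonneg (by positivity),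
    ← dist_eq_norm]
  calc ρ / (2 * r) * dist t x₀ ≤ ρ / (2 * r) * r := by gcongr; exact mem_closedBall.1 ht
    _ = ρ / 2 := by field_simp

theorem dist_innerCenter_center_le (ht : t ∈ closedBall x₀ r) (hr : 0 < r) (hρr : ρ ≤ 2 * r) :
    dist (innerCenter x₀ r t ρ) x₀ ≤ r - ρ / 2 := by
  have hρr' : 0 ≤ 1 - ρ / (2 * r) := by rw [sub_nonneg, div_le_one (by positivity)]; exact hρr
  rw [dist_eq_norm, innerCenter, add_sub_cancel_left, norm_smul, Real.norm_of_nonneg hρr',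
    ← dist_eq_norm]
  calc (1 - ρ / (2 * r)) * dist t x₀ ≤ (1 - ρ / (2 * r)) * r := by
        gcongr; exact mem_closedBall.1 ht
    _ = r - ρ / 2 := by field_simp

theorem ball_innerCenter_subset_ball_self (ht : t ∈ closedBall x₀ r) (hr : 0 < r) (hρ : 0 ≤ ρ) :
    ball (innerCenter x₀ r t ρ) (ρ * 4⁻¹) ⊆ ball t ρ :=
  ball_subset_ball' (by linarith [dist_innerCenter_self_le ht hr hρ])

theorem closedBall_innerCenter_subset_ball (ht : t ∈ closedBall x₀ r) (hr : 0 < r) (hρ : 0 < ρ)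
    (hρr : ρ ≤ 2 * r) : closedBall (innerCenter x₀ r t ρ) (ρ * 4⁻¹) ⊆ ball x₀ r :=
  closedBall_subset_ball' (by linarith [dist_innerCenter_center_le ht hr hρr])

end InnerBall

section Balls

variable {E : Type*} [NormedAddCommGroup E] [NormedSpace ℝ E] [FiniteDimensional ℝ E]
  [MeasurableSpace E] {μ : Measure E} [μ.IsAddHaarMeasure]

theorem measureReal_ball_pos (c : E) {R : ℝ} (hR : 0 < R) : 0 < μ.real (ball c R) :=
  ENNReal.toReal_pos (measure_ball_pos μ c hR).ne' measure_ball_lt_top.ne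

variable (μ) in
noncomputable def ballPairConst (s p κ a b : ℝ) : ℝ :=
  (κ ^ ((finrank ℝ E : ℝ) + s * p) / (μ.real (ball 0 a) * μ.real (ball 0 b))) ^ (1 / p)

theorem ballPairConst_pos {s p κ a b : ℝ} (hκ : 0 < κ) (ha : 0 < a) (hb : 0 < b) :
    0 < ballPairConst μ s p κ a b := by
  have := measureReal_ball_pos (μ := μ) 0 ha
  have := measureReal_ball_pos (μ := μ) 0 hb
  unfold ballPairConst
  positivity

variable (μ) in
noncomputable def holderConst (s p : ℝ) : ℝ :=
  2 * (ballPairConst μ s p 2 4⁻¹ 8⁻¹ / (1 - 2⁻¹ ^ (s - finrank ℝ E / p))) +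
    ballPairConst μ s p 3 4⁻¹ 4⁻¹

theorem holderConst_pos {p s : ℝ} (hp : 0 < p) (hsp : (finrank ℝ E : ℝ) < s * p) :
    0 < holderConst μ s p := by
  have hα : 0 < s - finrank ℝ E / p := by rw [sub_pos, div_lt_iff₀ hp]; exact hsp
  have hθ : (2⁻¹ : ℝ) ^ (s - finrank ℝ E / p) < 1 := Real.rpow_lt_one (by norm_num) (by norm_num) hα
  have h₁ : 0 ≤ ballPairConst μ s p 2 4⁻¹ 8⁻¹ / (1 - 2⁻¹ ^ (s - finrank ℝ E / p)) :=
    div_nonneg (ballPairConst_pos two_pos (by norm_num) (by norm_num)).le (by linarith)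
  have h₂ : 0 < ballPairConst μ s p 3 4⁻¹ 4⁻¹ :=
    ballPairConst_pos three_pos (by norm_num) (by norm_num)
  unfold holderConst
  positivity

variable [BorelSpace E]

theorem integrableOn_ball_of_closedBall_subset {Ω : Set E} {u : E → ℝ} (hu : ContinuousOn u Ω)
    {c : E} {R : ℝ} (h : closedBall c R ⊆ Ω) : IntegrableOn u (ball c R) μ :=
  ((hu.mono h).integrableOn_compact (isCompact_closedBall _ _)).mono_set ball_subset_closedBall

theorem measureReal_ball_mul (c : E) {ρ : ℝ} (hρ : 0 < ρ) (a : ℝ) :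
    μ.real (ball c (ρ * a)) = ρ ^ finrank ℝ E * μ.real (ball 0 a) := by
  rw [measureReal_def, Measure.addHaar_ball_mul_of_pos μ c hρ, ENNReal.toReal_mul,
    ENNReal.toReal_ofReal (by positivity), measureReal_def]

theorem abs_setAverage_ball_sub_setAverage_ball_le {Ω : Set E} {u : E → ℝ}
    (hu : ContinuousOn u Ω) {p s : ℝ} (hp : 1 ≤ p) (hγ : 0 ≤ (finrank ℝ E : ℝ) + s * p)
    (hG : gagliardoIntegral μ Ω u p (finrank ℝ E + s * p) ≠ ∞)
    {c₁ c₂ : E} {ρ a b κ : ℝ} (hρ : 0 < ρ) (ha : 0 < a) (hb : 0 < b)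
    (h₁ : closedBall c₁ (ρ * a) ⊆ Ω) (h₂ : closedBall c₂ (ρ * b) ⊆ Ω)
    (hD : ∀ x ∈ ball c₁ (ρ * a), ∀ y ∈ ball c₂ (ρ * b), ‖x - y‖ ≤ κ * ρ) :
    |(⨍ x in ball c₁ (ρ * a), u x ∂μ) - ⨍ y in ball c₂ (ρ * b), u y ∂μ| ≤
      ballPairConst μ s p κ a b * ρ ^ (s - finrank ℝ E / p) *
        (gagliardoIntegral μ Ω u p (finrank ℝ E + s * p)).toReal ^ (1 / p) := by
  set G := gagliardoIntegral μ Ω u p (finrank ℝ E + s * p)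
  have hp0 : 0 < p := zero_lt_one.trans_le hp
  have hκ : 0 ≤ κ := by
    have := hD c₁ (mem_ball_self (by positivity)) c₂ (mem_ball_self (by positivity))
    exact nonneg_of_mul_nonneg_left ((norm_nonneg _).trans this) hρ
  have hpos : ∀ (c : E) {R : ℝ}, 0 < R → μ (ball c R) ≠ 0 :=
    fun c _ hR ↦ (measure_ball_pos μ c hR).ne'
  have hX : ENNReal.ofReal ((κ * ρ) ^ ((finrank ℝ E : ℝ) + s * p)) * G /
      (μ (ball c₁ (ρ * a)) * μ (ball c₂ (ρ * b))) ≠ ∞ :=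
    ENNReal.div_ne_top (ENNReal.mul_ne_top ENNReal.ofReal_ne_top hG)
      (mul_ne_zero (hpos c₁ (by positivity)) (hpos c₂ (by positivity)))
  have hbound := (enorm_setAverage_sub_setAverage_le (hpos c₁ (by positivity))
    measure_ball_lt_top.ne (hpos c₂ (by positivity)) measure_ball_lt_top.ne
    (integrableOn_ball_of_closedBall_subset hu h₁) (integrableOn_ball_of_closedBall_subset hu h₂)
    hp).trans (ENNReal.rpow_le_rpow (ENNReal.div_le_div_right
      (lintegral_enorm_sub_rpow_le_gagliardoIntegral measurableSet_ball measurableSet_ball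
        (ball_subset_closedBall.trans h₁) (ball_subset_closedBall.trans h₂) hp0 hγ hD) _)
      (by positivity))
  rw [Real.enorm_eq_ofReal_abs, ENNReal.ofReal_le_iff_le_toReal
    (ENNReal.rpow_ne_top_of_nonneg (by positivity) hX)] at hbound
  refine hbound.trans_eq ?_
  rw [← ENNReal.toReal_rpow, ENNReal.toReal_div, ENNReal.toReal_mul, ENNReal.toReal_mul,
    ENNReal.toReal_ofReal (by positivity), ← measureReal_def, ← measureReal_def,
    measureReal_ball_mul _ hρ, measureReal_ball_mul _ hρ]
  exact rpow_scaling hp0 hκ hρ (measureReal_ball_pos 0 ha) (measureReal_ball_pos 0 hb)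
    ENNReal.toReal_nonneg

theorem abs_setAverage_innerCenter_sub_half_le {x₀ : E} {r : ℝ} (hr : 0 < r) {u : E → ℝ}
    (hu : ContinuousOn u (ball x₀ r)) {p s : ℝ} (hp : 1 ≤ p)
    (hγ : 0 ≤ (finrank ℝ E : ℝ) + s * p)
    (hG : gagliardoIntegral μ (ball x₀ r) u p (finrank ℝ E + s * p) ≠ ∞)
    {t : E} (ht : t ∈ closedBall x₀ r) {ρ : ℝ} (hρ : 0 < ρ) (hρr : ρ ≤ 2 * r) :
    |(⨍ x in ball (innerCenter x₀ r t ρ) (ρ * 4⁻¹), u x ∂μ) -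
        ⨍ x in ball (innerCenter x₀ r t (ρ * 2⁻¹)) (ρ * 2⁻¹ * 4⁻¹), u x ∂μ| ≤
      ballPairConst μ s p 2 4⁻¹ 8⁻¹ * ρ ^ (s - finrank ℝ E / p) *
        (gagliardoIntegral μ (ball x₀ r) u p (finrank ℝ E + s * p)).toReal ^ (1 / p) := by
  have hρ₂ : 0 < ρ * 2⁻¹ := by positivity
  have h₈ : ρ * 2⁻¹ * 4⁻¹ = ρ * 8⁻¹ := by ring
  rw [h₈]
  refine abs_setAverage_ball_sub_setAverage_ball_le hu hp hγ hG hρ (by norm_num) (by norm_num)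
    (closedBall_innerCenter_subset_ball ht hr hρ hρr)
    (h₈ ▸ closedBall_innerCenter_subset_ball ht hr hρ₂ (by linarith)) fun x hx y hy ↦ ?_
  rw [← h₈] at hy
  have hx' := mem_ball.1 (ball_innerCenter_subset_ball_self ht hr hρ.le hx)
  have hy' := mem_ball.1 (ball_innerCenter_subset_ball_self ht hr hρ₂.le hy)
  rw [← dist_eq_norm]
  linarith [dist_triangle_right x y t]

theorem abs_sub_setAverage_ball_innerCenter_le {x₀ : E} {r : ℝ} (hr : 0 < r) {u : E → ℝ}
    (hu : ContinuousOn u (ball x₀ r)) {p s : ℝ} (hp : 1 ≤ p) (hsp : (finrank ℝ E : ℝ) < s * p)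
    (hG : gagliardoIntegral μ (ball x₀ r) u p (finrank ℝ E + s * p) ≠ ∞)
    {t : E} (ht : t ∈ ball x₀ r) {d : ℝ} (hd : 0 < d) (hdr : d ≤ 2 * r) :
    |u t - ⨍ x in ball (innerCenter x₀ r t d) (d * 4⁻¹), u x ∂μ| ≤
      ballPairConst μ s p 2 4⁻¹ 8⁻¹ / (1 - 2⁻¹ ^ (s - finrank ℝ E / p)) *
        d ^ (s - finrank ℝ E / p) *
        (gagliardoIntegral μ (ball x₀ r) u p (finrank ℝ E + s * p)).toReal ^ (1 / p) := by
  set α := s - finrank ℝ E / p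
  set M := (gagliardoIntegral μ (ball x₀ r) u p (finrank ℝ E + s * p)).toReal ^ (1 / p)
  set K := ballPairConst μ s p 2 4⁻¹ 8⁻¹
  have hp0 : 0 < p := zero_lt_one.trans_le hp
  have hα : 0 < α := by rw [sub_pos, div_lt_iff₀ hp0]; exact hsp
  have hγ : 0 ≤ (finrank ℝ E : ℝ) + s * p := by linarith [(finrank ℝ E).cast_nonneg (α := ℝ)]
  have ht' : t ∈ closedBall x₀ r := ball_subset_closedBall ht
  set ρ : ℕ → ℝ := fun k ↦ d * 2⁻¹ ^ k
  have hρ : ∀ k, 0 < ρ k := fun k ↦ by positivity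
  have hρr : ∀ k, ρ k ≤ 2 * r := fun k ↦
    (mul_le_of_le_one_right hd.le (pow_le_one₀ (by norm_num) (by norm_num))).trans hdr
  set F : ℕ → ℝ := fun k ↦ ⨍ x in ball (innerCenter x₀ r t (ρ k)) (ρ k * 4⁻¹), u x ∂μ
  have hstep : ∀ k, dist (F k) (F (k + 1)) ≤ K * d ^ α * M * (2⁻¹ ^ α) ^ k := by
    intro k
    have hsucc : ρ (k + 1) = ρ k * 2⁻¹ := by simp only [ρ, pow_succ]; ring
    have hρα : ρ k ^ α = d ^ α * (2⁻¹ ^ α) ^ k := by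
      rw [Real.mul_rpow hd.le (by positivity), ← Real.rpow_pow_comm (by norm_num)]
    rw [Real.dist_eq]
    simp only [F, hsucc]
    refine (abs_setAverage_innerCenter_sub_half_le hr hu hp hγ hG ht' (hρ k) (hρr k)).trans_eq ?_
    rw [hρα]
    ring
  have hlim : Tendsto F atTop (𝓝 (u t)) := by
    have hρ0 : Tendsto ρ atTop (𝓝 0) := by
      show Tendsto (fun k ↦ d * 2⁻¹ ^ k) atTop (𝓝 0)
      simpa using (tendsto_pow_atTop_nhds_zero_of_lt_one (by norm_num : (0 : ℝ) ≤ 2⁻¹)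
        (by norm_num)).const_mul d
    refine tendsto_setAverage_of_continuousWithinAt (hu t ht) (fun _ ↦ measurableSet_ball)
      (fun k ↦ ball_subset_closedBall.trans
        (closedBall_innerCenter_subset_ball ht' hr (hρ k) (hρr k)))
      (fun k ↦ (measure_ball_pos μ _ (by positivity)).ne') (fun _ ↦ measure_ball_lt_top.ne)
      (fun k ↦ integrableOn_ball_of_closedBall_subset hu
        (closedBall_innerCenter_subset_ball ht' hr (hρ k) (hρr k))) fun ε hε ↦ ?_
    filter_upwards [hρ0.eventually (gt_mem_nhds hε)] with k hk
    exact (ball_innerCenter_subset_ball_self ht' hr (hρ k).le).trans (ball_subset_ball hk.le)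
  have hθ : (2⁻¹ : ℝ) ^ α < 1 := Real.rpow_lt_one (by norm_num) (by norm_num) hα
  have h := dist_le_of_le_geometric_of_tendsto₀ _ _ hθ hstep hlim
  rw [dist_comm, Real.dist_eq] at h
  convert h using 1
  · simp [F, ρ]
  · ring

theorem abs_sub_le_holderConst_mul {x₀ : E} {r : ℝ} (hr : 0 < r) {u : E → ℝ}
    (hu : ContinuousOn u (ball x₀ r)) {p s : ℝ} (hp : 1 ≤ p) (hsp : (finrank ℝ E : ℝ) < s * p)
    (hG : gagliardoIntegral μ (ball x₀ r) u p (finrank ℝ E + s * p) ≠ ∞)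
    {x y : E} (hx : x ∈ ball x₀ r) (hy : y ∈ ball x₀ r) (hxy : x ≠ y) :
    |u x - u y| ≤ holderConst μ s p * ‖x - y‖ ^ (s - finrank ℝ E / p) *
      (gagliardoIntegral μ (ball x₀ r) u p (finrank ℝ E + s * p)).toReal ^ (1 / p) := by
  set d := ‖x - y‖
  have hd : 0 < d := norm_sub_pos_iff.2 hxy
  have hdr : d ≤ 2 * r := by
    rw [show d = dist x y from (dist_eq_norm x y).symm]
    linarith [dist_triangle_right x y x₀, mem_ball.1 hx, mem_ball.1 hy]
  have hγ : 0 ≤ (finrank ℝ E : ℝ) + s * p := by linarith [(finrank ℝ E).cast_nonneg (α := ℝ)]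
  have hx' := ball_subset_closedBall hx
  have hy' := ball_subset_closedBall hy
  have hD : ∀ a ∈ ball (innerCenter x₀ r x d) (d * 4⁻¹),
      ∀ b ∈ ball (innerCenter x₀ r y d) (d * 4⁻¹), ‖a - b‖ ≤ 3 * d := by
    intro a ha b hb
    have ha' := mem_ball.1 (ball_innerCenter_subset_ball_self hx' hr hd.le ha)
    have hb' := mem_ball.1 (ball_innerCenter_subset_ball_self hy' hr hd.le hb)
    rw [← dist_eq_norm]
    linarith [dist_triangle4 a x y b, dist_comm b y, dist_eq_norm x y]
  have hmid := abs_setAverage_ball_sub_setAverage_ball_le hu hp hγ hG hd (by norm_num)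
    (by norm_num) (closedBall_innerCenter_subset_ball hx' hr hd hdr)
    (closedBall_innerCenter_subset_ball hy' hr hd hdr) hD
  have hxA := abs_sub_setAverage_ball_innerCenter_le hr hu hp hsp hG hx hd hdr (μ := μ)
  have hyB := abs_sub_setAverage_ball_innerCenter_le hr hu hp hsp hG hy hd hdr (μ := μ)
  set A := ⨍ a in ball (innerCenter x₀ r x d) (d * 4⁻¹), u a ∂μ
  set B := ⨍ b in ball (innerCenter x₀ r y d) (d * 4⁻¹), u b ∂μ
  calc |u x - u y| ≤ |u x - A| + |A - B| + |u y - B| := by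
        linarith [abs_sub_le (u x) A (u y), abs_sub_le A B (u y), abs_sub_comm (u y) B]
    _ ≤ _ := by unfold holderConst; linarith

theorem ofReal_abs_sub_le_holderConst_mul {x₀ : E} {r : ℝ} (hr : 0 < r) {u : E → ℝ}
    (hu : ContinuousOn u (ball x₀ r)) {p s : ℝ} (hp : 1 ≤ p) (hsp : (finrank ℝ E : ℝ) < s * p)
    {x y : E} (hx : x ∈ ball x₀ r) (hy : y ∈ ball x₀ r) (hxy : x ≠ y) :
    ENNReal.ofReal |u x - u y| ≤ ENNReal.ofReal (holderConst μ s p) *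
      ENNReal.ofReal (‖x - y‖ ^ (s - finrank ℝ E / p)) *
      gagliardoIntegral μ (ball x₀ r) u p (finrank ℝ E + s * p) ^ (1 / p) := by
  have hp0 : 0 < p := zero_lt_one.trans_le hp
  have hC := holderConst_pos (μ := μ) hp0 hsp
  by_cases hG : gagliardoIntegral μ (ball x₀ r) u p (finrank ℝ E + s * p) = ∞
  · rw [hG, ENNReal.top_rpow_of_pos (by positivity), ENNReal.mul_top]
    · exact le_top
    · exact mul_ne_zero (ENNReal.ofReal_pos.2 hC).ne'
        (ENNReal.ofReal_pos.2 (Real.rpow_pos_of_pos (norm_sub_pos_iff.2 hxy) _)).ne'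
  · rw [← ENNReal.ofReal_toReal (ENNReal.rpow_ne_top_of_nonneg (by positivity) hG),
      ← ENNReal.ofReal_mul hC.le, ← ENNReal.ofReal_mul (by positivity), ← ENNReal.toReal_rpow]
    exact ENNReal.ofReal_le_ofReal (abs_sub_le_holderConst_mul hr hu hp hsp hG hx hy hxy)

end Balls

theorem stmt_4_general (n : ℕ) (s p : ℝ) (hp : 1 ≤ p)
    (hsp : (n : ℝ) < s * p) :
    ∃ C : ℝ, 0 < C ∧ ∀ (r : ℝ) (x0 : EuclideanSpace ℝ (Fin n))
      (u : EuclideanSpace ℝ (Fin n) → ℝ), 0 < r → ContinuousOn u (ball x0 r) →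
      ∀ x ∈ ball x0 r, ∀ y ∈ ball x0 r, x ≠ y →
      ENNReal.ofReal (|u x - u y|) ≤
        ENNReal.ofReal C * ENNReal.ofReal (‖x - y‖ ^ (s - (n : ℝ) / p)) *
          (∫⁻ a in ball x0 r, ∫⁻ b in ball x0 r,
            ENNReal.ofReal (|u a - u b| ^ p / ‖a - b‖ ^ ((n : ℝ) + s * p))) ^ (1 / p) := by
  have hsp' : (finrank ℝ (EuclideanSpace ℝ (Fin n)) : ℝ) < s * p := by
    rwa [finrank_euclideanSpace_fin]
  refine ⟨holderConst volume s p, holderConst_pos (zero_lt_one.trans_le hp) hsp',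
    fun r x0 u hr hu x hx y hy hxy ↦ ?_⟩
  simpa only [finrank_euclideanSpace_fin, gagliardoIntegral] using
    ofReal_abs_sub_le_holderConst_mul hr hu hp hsp' hx hy hxy (μ := volume)

/-- Scaled Hölder embedding on balls: if `sp > n`, then for every ball `B_r(x₀)` and every
(continuous representative of a) function `u ∈ W^{s,p}(B_r(x₀))`, the Hölder seminorm of
exponent `s - n/p` is controlled by the Gagliardo seminorm, with a constant depending only
on `n`, `s` and `p` (in particular independent of `r` and `x₀`). -/
theorem stmt_4 (n : ℕ) (hn : 1 ≤ n) (s p : ℝ) (hs : s ∈ Ioo (0 : ℝ) 1) (hp : 1 ≤ p)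
    (hsp : (n : ℝ) < s * p) :
    ∃ C : ℝ, 0 < C ∧ ∀ (r : ℝ) (x0 : EuclideanSpace ℝ (Fin n))
      (u : EuclideanSpace ℝ (Fin n) → ℝ), 0 < r → ContinuousOn u (ball x0 r) →
      ∀ x ∈ ball x0 r, ∀ y ∈ ball x0 r, x ≠ y →
      ENNReal.ofReal (|u x - u y|) ≤
        ENNReal.ofReal C * ENNReal.ofReal (‖x - y‖ ^ (s - (n : ℝ) / p)) *
          (∫⁻ a in ball x0 r, ∫⁻ b in ball x0 r,
            ENNReal.ofReal (|u a - u b| ^ p / ‖a - b‖ ^ ((n : ℝ) + s * p))) ^ (1 / p) :=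
  stmt_4_general n s p hp hsp
end

section
/- The function A(x,y) = sin(|log(|x|+|y|)|^α) + 2 for (x,y) ≠ (0,0) (extended by 0 at the origin), with α ∈ (0,1), is of vanishing mean oscillation near the origin in the following quantitative sense: for every δ > 0 there exists R > 0 such that for all ρ ∈ (0,R] and all x0, y0 ∈ B_R(0) with B_ρ(x0) ∪ B_ρ(y0) ⊆ B_R(0), ⨍_{B_ρ(x0)} ⨍_{B_ρ(y0)} |A(x,y) − Ā_{ρ,x0,y0}| dy dx ≤ δ; yet A is discontinuous at (0,0). -/
open MeasureTheory Metric Set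

open Filter Topology ProbabilityTheory Module

/-!
Off the origin `A(x, y) = g (‖x‖ + ‖y‖)` with `g = sinLogProfile α`, and `1 ≤ g ≤ 3`; since
`A 0 = 0` and the origin is not isolated, `A` is discontinuous there.

The mean oscillation on `B_ρ(x0) × B_ρ(y0)` is at most twice the mean deviation from any constant;
we take `g S` with `S = ‖x0‖ + ‖y0‖ + 2ρ`, which dominates `‖x‖ + ‖y‖` on the product of balls.
Fix `θ ∈ (0, 1]`. The part where `‖x‖ + ‖y‖ < θρ` lies in `B_{θρ}(0) × B_{θρ}(0)`, a fraction
at most `θ` of the product, and contributes at most `2θ`. Elsewhere `S ≤ (6/θ)(‖x‖ + ‖y‖)`, so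
`|log|` changes by at most `log (6/θ)` between the two points; on `[M, ∞)` the map
`r ↦ sin (r ^ α)` is `α M^(α-1)`-Lipschitz, and `M^(α-1) → 0` because `α < 1`. Taking
`S ≤ exp (-M)` with `M` large makes the contribution of this part small as well.
-/

noncomputable def sinLogProfile (α t : ℝ) : ℝ := Real.sin (|Real.log t| ^ α) + 2

lemma setAverage_eq_integral_cond {X : Type*} [MeasurableSpace X] (μ : Measure X) (s : Set X)
    (f : X → ℝ) : ⨍ x in s, f x ∂μ = ∫ x, f x ∂μ[|s] := by
  rw [average_eq', Measure.restrict_apply_univ]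
  rfl

lemma integral_abs_sub_integral_le {X : Type*} [MeasurableSpace X] {P : Measure X}
    [IsProbabilityMeasure P] {f : X → ℝ} (hf : Integrable f P) (c : ℝ) :
    ∫ x, |f x - ∫ y, f y ∂P| ∂P ≤ 2 * ∫ x, |f x - c| ∂P := by
  have hfc : Integrable (fun x => |f x - c|) P := (hf.sub (integrable_const c)).abs
  have hmean : |(∫ y, f y ∂P) - c| ≤ ∫ x, |f x - c| ∂P := by
    have : ∫ x, (f x - c) ∂P = (∫ y, f y ∂P) - c := by
      rw [integral_sub hf (integrable_const c), integral_const, probReal_univ, one_smul]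
    exact this ▸ abs_integral_le_integral_abs
  calc ∫ x, |f x - ∫ y, f y ∂P| ∂P ≤ ∫ x, (|f x - c| + |(∫ y, f y ∂P) - c|) ∂P :=
        integral_mono (hf.sub (integrable_const _)).abs (hfc.add (integrable_const _))
          fun x => (abs_sub_le _ c _).trans_eq (by rw [abs_sub_comm c])
    _ = (∫ x, |f x - c| ∂P) + |(∫ y, f y ∂P) - c| := by
        rw [integral_add hfc (integrable_const _), integral_const, probReal_univ, one_smul]
    _ ≤ 2 * ∫ x, |f x - c| ∂P := by linarith

lemma integral_le_add_mul_measureReal {X : Type*} [MeasurableSpace X] {P : Measure X}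
    [IsProbabilityMeasure P] {g : X → ℝ} (hg : Integrable g P) {B : Set X} (hB : MeasurableSet B)
    {ε C : ℝ} (h : ∀ᵐ x ∂P, g x ≤ ε + B.indicator (fun _ => C) x) :
    ∫ x, g x ∂P ≤ ε + C * P.real B := by
  calc ∫ x, g x ∂P ≤ ∫ x, (ε + B.indicator (fun _ => C) x) ∂P :=
        integral_mono_ae hg ((integrable_const ε).add ((integrable_const C).indicator hB)) h
    _ = ε + C * P.real B := by
        rw [integral_add (integrable_const ε) ((integrable_const C).indicator hB), integral_const,
          probReal_univ, one_smul, integral_indicator_const C hB, smul_eq_mul, mul_comm]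

lemma abs_sin_rpow_sub_sin_rpow_le {α M u v : ℝ} (hα0 : 0 ≤ α) (hα1 : α ≤ 1) (hM : 0 < M)
    (hu : M ≤ u) (hv : M ≤ v) :
    |Real.sin (v ^ α) - Real.sin (u ^ α)| ≤ α * M ^ (α - 1) * |v - u| := by
  have hderiv : ∀ x ∈ Ici M, HasDerivWithinAt (fun x : ℝ => Real.sin (x ^ α))
      (Real.cos (x ^ α) * (α * x ^ (α - 1))) (Ici M) x := fun x hx =>
    ((Real.hasDerivAt_rpow_const (Or.inl (hM.trans_le hx).ne')).sin).hasDerivWithinAt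
  have hbound : ∀ x ∈ Ici M, ‖Real.cos (x ^ α) * (α * x ^ (α - 1))‖ ≤ α * M ^ (α - 1) := by
    intro x hx
    have hx0 : 0 < x := hM.trans_le hx
    rw [norm_mul, Real.norm_eq_abs, Real.norm_of_nonneg (by positivity)]
    calc |Real.cos (x ^ α)| * (α * x ^ (α - 1)) ≤ 1 * (α * M ^ (α - 1)) :=
          mul_le_mul (Real.abs_cos_le_one _)
            (mul_le_mul_of_nonneg_left (Real.rpow_le_rpow_of_nonpos hM hx (by linarith)) hα0)
            (by positivity) zero_le_one
      _ = α * M ^ (α - 1) := one_mul _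
  simpa only [Real.norm_eq_abs] using
    (convex_Ici M).norm_image_sub_le_of_norm_hasDerivWithin_le hderiv hbound hu hv

lemma sinLogProfile_mem_Icc (α t : ℝ) : sinLogProfile α t ∈ Icc 1 3 := by
  have := Real.neg_one_le_sin (|Real.log t| ^ α)
  have := Real.sin_le_one (|Real.log t| ^ α)
  unfold sinLogProfile
  constructor <;> linarith

@[fun_prop]
lemma measurable_sinLogProfile (α : ℝ) : Measurable (sinLogProfile α) := by
  unfold sinLogProfile
  fun_prop

lemma abs_sinLogProfile_sub_le_two (α t s : ℝ) : |sinLogProfile α t - sinLogProfile α s| ≤ 2 := by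
  have ht := sinLogProfile_mem_Icc α t
  have hs := sinLogProfile_mem_Icc α s
  rw [abs_le]
  constructor <;> linarith [ht.1, ht.2, hs.1, hs.2]

lemma abs_sinLogProfile_sub_le {α M t S : ℝ} (hα0 : 0 ≤ α) (hα1 : α ≤ 1) (hM : 0 < M)
    (ht : 0 < t) (htS : t ≤ S) (hS : S ≤ Real.exp (-M)) :
    |sinLogProfile α t - sinLogProfile α S| ≤ α * M ^ (α - 1) * Real.log (S / t) := by
  have hS0 : 0 < S := ht.trans_le htS
  have hS1 : S < 1 := hS.trans_lt (Real.exp_lt_one_iff.2 (by linarith))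
  have hlogS : M ≤ -Real.log S := by
    have := Real.log_le_log hS0 hS
    rw [Real.log_exp] at this
    linarith
  have hlogt : Real.log t ≤ Real.log S := Real.log_le_log ht htS
  have key := abs_sin_rpow_sub_sin_rpow_le hα0 hα1 hM hlogS (hlogS.trans (neg_le_neg hlogt))
  rw [neg_sub_neg, ← Real.log_div hS0.ne' ht.ne',
    abs_of_nonneg (Real.log_nonneg ((one_le_div ht).2 htS))] at key
  unfold sinLogProfile
  rwa [abs_of_neg (Real.log_neg ht (htS.trans_lt hS1)), abs_of_neg (Real.log_neg hS0 hS1),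
    add_sub_add_right_eq_sub]

section BallProducts

variable {E F : Type*} [SeminormedAddCommGroup E] [SeminormedAddCommGroup F] {x0 : E} {y0 : F}
  {ρ : ℝ} {q : E × F}

lemma norm_add_norm_le_of_mem_ball_prod (hq : q ∈ ball x0 ρ ×ˢ ball y0 ρ) :
    ‖q.1‖ + ‖q.2‖ ≤ ‖x0‖ + ‖y0‖ + 2 * ρ := by
  obtain ⟨h1, h2⟩ := hq
  rw [mem_ball_iff_norm] at h1 h2
  linarith [norm_le_norm_add_norm_sub' q.1 x0, norm_le_norm_add_norm_sub' q.2 y0]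

lemma mul_norm_add_norm_le_of_mem_ball_prod {θ : ℝ} (hθ0 : 0 ≤ θ) (hθ1 : θ ≤ 1)
    (hq : q ∈ ball x0 ρ ×ˢ ball y0 ρ) (hθq : θ * ρ ≤ ‖q.1‖ + ‖q.2‖) :
    θ * (‖x0‖ + ‖y0‖ + 2 * ρ) ≤ 6 * (‖q.1‖ + ‖q.2‖) := by
  obtain ⟨h1, h2⟩ := hq
  rw [mem_ball_iff_norm'] at h1 h2
  have := norm_sub_norm_le x0 q.1
  have := norm_sub_norm_le y0 q.2
  have hρ : 0 < ρ := (norm_nonneg _).trans_lt h1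
  rcases le_or_gt (‖x0‖ + ‖y0‖) (4 * ρ) with h | h
  · nlinarith
  · nlinarith [mul_le_of_le_one_left (by positivity : 0 ≤ ‖x0‖ + ‖y0‖ + 2 * ρ) hθ1]

lemma abs_sinLogProfile_sub_le_of_mem_ball_prod {α M θ : ℝ} (hα0 : 0 ≤ α) (hα1 : α ≤ 1)
    (hM : 0 < M) (hθ0 : 0 < θ) (hθ1 : θ ≤ 1) (hq : q ∈ ball x0 ρ ×ˢ ball y0 ρ)
    (hS : ‖x0‖ + ‖y0‖ + 2 * ρ ≤ Real.exp (-M)) :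
    |sinLogProfile α (‖q.1‖ + ‖q.2‖) - sinLogProfile α (‖x0‖ + ‖y0‖ + 2 * ρ)| ≤
      α * M ^ (α - 1) * Real.log (6 / θ) +
        {q : E × F | ‖q.1‖ + ‖q.2‖ < θ * ρ}.indicator (fun _ => 2) q := by
  by_cases hsmall : q ∈ {q : E × F | ‖q.1‖ + ‖q.2‖ < θ * ρ}
  · have : 0 ≤ α * M ^ (α - 1) * Real.log (6 / θ) :=
      mul_nonneg (by positivity) (Real.log_nonneg ((le_div_iff₀ hθ0).2 (by linarith)))
    rw [indicator_of_mem hsmall]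
    linarith [abs_sinLogProfile_sub_le_two α (‖q.1‖ + ‖q.2‖) (‖x0‖ + ‖y0‖ + 2 * ρ)]
  · rw [indicator_of_notMem hsmall, add_zero]
    replace hsmall : θ * ρ ≤ ‖q.1‖ + ‖q.2‖ := not_lt.1 hsmall
    have hρ : 0 < ρ := dist_nonneg.trans_lt hq.1
    have ht : 0 < ‖q.1‖ + ‖q.2‖ := (by positivity : 0 < θ * ρ).trans_le hsmall
    refine (abs_sinLogProfile_sub_le hα0 hα1 hM ht (norm_add_norm_le_of_mem_ball_prod hq)
      hS).trans ?_
    gcongr α * M ^ (α - 1) * Real.log ?_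
    rw [div_le_div_iff₀ ht hθ0, mul_comm]
    exact mul_norm_add_norm_le_of_mem_ball_prod hθ0.le hθ1 hq hsmall

end BallProducts

section HaarBalls

variable {E : Type*} [NormedAddCommGroup E] [NormedSpace ℝ E] [MeasurableSpace E]
  [FiniteDimensional ℝ E] (μ : Measure E) [μ.IsAddHaarMeasure]

lemma prod_measure_ball_prod_ne_zero (x0 y0 : E) {ρ : ℝ} (hρ : 0 < ρ) :
    (μ.prod μ) (ball x0 ρ ×ˢ ball y0 ρ) ≠ 0 := by
  rw [Measure.prod_prod]
  exact mul_ne_zero (measure_ball_pos μ x0 hρ).ne' (measure_ball_pos μ y0 hρ).ne'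

lemma prod_measure_ball_prod_ne_top (x0 y0 : E) (ρ : ℝ) :
    (μ.prod μ) (ball x0 ρ ×ˢ ball y0 ρ) ≠ ⊤ := by
  rw [Measure.prod_prod]
  exact ENNReal.mul_ne_top measure_ball_lt_top.ne measure_ball_lt_top.ne

lemma isProbabilityMeasure_cond_ball_prod (x0 y0 : E) {ρ : ℝ} (hρ : 0 < ρ) :
    IsProbabilityMeasure ((μ.prod μ)[|ball x0 ρ ×ˢ ball y0 ρ]) :=
  cond_isProbabilityMeasure_of_finite (prod_measure_ball_prod_ne_zero μ x0 y0 hρ)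
    (prod_measure_ball_prod_ne_top μ x0 y0 ρ)

variable [BorelSpace E] [Nontrivial E]

lemma addHaar_ball_mul_le (x y : E) {θ : ℝ} (hθ0 : 0 ≤ θ) (hθ1 : θ ≤ 1) (ρ : ℝ) :
    μ (ball y (θ * ρ)) ≤ ENNReal.ofReal θ * μ (ball x ρ) := by
  rw [Measure.addHaar_ball_mul μ y hθ0, Measure.addHaar_ball_center μ x]
  gcongr
  exact pow_le_of_le_one hθ0 hθ1 finrank_pos.ne'

lemma prod_measure_ball_prod_inter_le (x0 y0 : E) {θ : ℝ} (hθ0 : 0 ≤ θ) (hθ1 : θ ≤ 1) (ρ : ℝ) :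
    (μ.prod μ) (ball x0 ρ ×ˢ ball y0 ρ ∩ {q | ‖q.1‖ + ‖q.2‖ < θ * ρ}) ≤
      ENNReal.ofReal θ * (μ.prod μ) (ball x0 ρ ×ˢ ball y0 ρ) := by
  have hsub : ball x0 ρ ×ˢ ball y0 ρ ∩ {q : E × E | ‖q.1‖ + ‖q.2‖ < θ * ρ} ⊆
      ball 0 (θ * ρ) ×ˢ ball 0 (θ * ρ) := fun q hq => by
    have : ‖q.1‖ + ‖q.2‖ < θ * ρ := hq.2
    constructor <;> rw [mem_ball_zero_iff] <;> linarith [norm_nonneg q.1, norm_nonneg q.2]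
  have hθ : ENNReal.ofReal θ ≤ 1 := ENNReal.ofReal_le_one.2 hθ1
  calc _ ≤ (μ.prod μ) (ball 0 (θ * ρ) ×ˢ ball 0 (θ * ρ)) := measure_mono hsub
    _ ≤ (ENNReal.ofReal θ * μ (ball x0 ρ)) * (ENNReal.ofReal θ * μ (ball y0 ρ)) := by
        rw [Measure.prod_prod]
        gcongr <;> exact addHaar_ball_mul_le μ _ _ hθ0 hθ1 ρ
    _ ≤ ENNReal.ofReal θ * (μ.prod μ) (ball x0 ρ ×ˢ ball y0 ρ) := by
        rw [Measure.prod_prod, mul_mul_mul_comm]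
        gcongr
        exact mul_le_of_le_one_right' hθ

lemma measureReal_cond_ball_prod_setOf_lt_le (x0 y0 : E) {θ ρ : ℝ} (hθ0 : 0 ≤ θ) (hθ1 : θ ≤ 1)
    (hρ : 0 < ρ) :
    ((μ.prod μ)[|ball x0 ρ ×ˢ ball y0 ρ]).real {q | ‖q.1‖ + ‖q.2‖ < θ * ρ} ≤ θ := by
  set s := ball x0 ρ ×ˢ ball y0 ρ
  refine ENNReal.toReal_le_of_le_ofReal hθ0 ?_
  calc (μ.prod μ)[|s] {q | ‖q.1‖ + ‖q.2‖ < θ * ρ}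
      = ((μ.prod μ) s)⁻¹ * (μ.prod μ) (s ∩ {q | ‖q.1‖ + ‖q.2‖ < θ * ρ}) :=
        cond_apply (measurableSet_ball.prod measurableSet_ball) _ _
    _ ≤ ((μ.prod μ) s)⁻¹ * (ENNReal.ofReal θ * (μ.prod μ) s) := by
        gcongr
        exact prod_measure_ball_prod_inter_le μ x0 y0 hθ0 hθ1 ρ
    _ = ENNReal.ofReal θ := by
        rw [mul_left_comm, ENNReal.inv_mul_cancel (prod_measure_ball_prod_ne_zero μ x0 y0 hρ)
          (prod_measure_ball_prod_ne_top μ x0 y0 ρ), mul_one]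

lemma setAverage_abs_sub_setAverage_le {α : ℝ} (hα0 : 0 ≤ α) (hα1 : α ≤ 1) {A : E × E → ℝ}
    (hA : A =ᵐ[μ.prod μ] fun q => sinLogProfile α (‖q.1‖ + ‖q.2‖)) {θ M ρ : ℝ} (hθ0 : 0 < θ)
    (hθ1 : θ ≤ 1) (hM : 0 < M) (hρ : 0 < ρ) {x0 y0 : E}
    (hS : ‖x0‖ + ‖y0‖ + 2 * ρ ≤ Real.exp (-M)) :
    ⨍ q in ball x0 ρ ×ˢ ball y0 ρ, |A q - ⨍ q' in ball x0 ρ ×ˢ ball y0 ρ, A q' ∂(μ.prod μ)|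
        ∂(μ.prod μ) ≤ 2 * (α * M ^ (α - 1) * Real.log (6 / θ) + 2 * θ) := by
  set P := (μ.prod μ)[|ball x0 ρ ×ˢ ball y0 ρ]
  set B := {q : E × E | ‖q.1‖ + ‖q.2‖ < θ * ρ}
  set c := sinLogProfile α (‖x0‖ + ‖y0‖ + 2 * ρ)
  have := isProbabilityMeasure_cond_ball_prod μ x0 y0 hρ
  have hAP : A =ᵐ[P] fun q => sinLogProfile α (‖q.1‖ + ‖q.2‖) :=
    cond_absolutelyContinuous.ae_le hA
  have hint : Integrable A P := by
    have hmeas : Measurable fun q : E × E => sinLogProfile α (‖q.1‖ + ‖q.2‖) := by fun_prop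
    refine (Integrable.of_bound hmeas.aestronglyMeasurable 3 (ae_of_all _ fun q => ?_)).congr
      hAP.symm
    have := sinLogProfile_mem_Icc α (‖q.1‖ + ‖q.2‖)
    rw [Real.norm_eq_abs, abs_le]
    constructor <;> linarith [this.1, this.2]
  have hbound : ∀ᵐ q ∂P, |A q - c| ≤
      α * M ^ (α - 1) * Real.log (6 / θ) + B.indicator (fun _ => 2) q := by
    filter_upwards [hAP, ae_cond_mem (measurableSet_ball.prod measurableSet_ball)] with q hq hqs
    rw [hq]
    exact abs_sinLogProfile_sub_le_of_mem_ball_prod hα0 hα1 hM hθ0 hθ1 hqs hS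
  rw [setAverage_eq_integral_cond, setAverage_eq_integral_cond]
  calc ∫ q, |A q - ∫ q', A q' ∂P| ∂P ≤ 2 * ∫ q, |A q - c| ∂P := integral_abs_sub_integral_le hint c
    _ ≤ 2 * (α * M ^ (α - 1) * Real.log (6 / θ) + 2 * P.real B) := by
        gcongr
        exact integral_le_add_mul_measureReal (hint.sub (integrable_const c)).abs
          (measurableSet_lt (by fun_prop) measurable_const) hbound
    _ ≤ 2 * (α * M ^ (α - 1) * Real.log (6 / θ) + 2 * θ) := by
        gcongr
        exact measureReal_cond_ball_prod_setOf_lt_le μ x0 y0 hθ0.le hθ1 hρ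

theorem exists_forall_setAverage_abs_sub_setAverage_le {α : ℝ} (hα0 : 0 ≤ α) (hα1 : α < 1)
    {A : E × E → ℝ} (hA : A =ᵐ[μ.prod μ] fun q => sinLogProfile α (‖q.1‖ + ‖q.2‖)) {δ : ℝ}
    (hδ : 0 < δ) :
    ∃ R, 0 < R ∧ ∀ ρ, 0 < ρ → ρ ≤ R → ∀ x0 y0 : E, ‖x0‖ < R → ‖y0‖ < R →
      ⨍ q in ball x0 ρ ×ˢ ball y0 ρ, |A q - ⨍ q' in ball x0 ρ ×ˢ ball y0 ρ, A q' ∂(μ.prod μ)|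
        ∂(μ.prod μ) ≤ δ := by
  set θ := min 1 (δ / 8)
  have hθ0 : 0 < θ := lt_min one_pos (by positivity)
  have hθδ : θ ≤ δ / 8 := min_le_right _ _
  have hdecay : Tendsto (fun M : ℝ => α * M ^ (α - 1) * Real.log (6 / θ)) atTop (𝓝 0) := by
    have := (tendsto_rpow_neg_atTop (by linarith : 0 < 1 - α)).const_mul α |>.mul_const
      (Real.log (6 / θ))
    simpa only [neg_sub, mul_zero, zero_mul] using this
  obtain ⟨M, hMδ, hM⟩ :=
    ((hdecay.eventually (ge_mem_nhds (by positivity : (0 : ℝ) < δ / 4))).and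
      (eventually_gt_atTop 0)).exists
  refine ⟨Real.exp (-M) / 4, by positivity, fun ρ hρ hρR x0 y0 hx0 hy0 => ?_⟩
  refine (setAverage_abs_sub_setAverage_le μ hα0 hα1.le hA hθ0 (min_le_left _ _) hM hρ
    (by linarith)).trans ?_
  linarith

end HaarBalls

/-- The coefficient `A(x,y) = sin(|log(|x|+|y|)|^α) + 2` for `(x,y) ≠ (0,0)` (extended by
`0` at the origin), with `α ∈ (0,1)`, has vanishing mean oscillation near the origin in the
two-ball quantitative sense, yet is discontinuous at the origin. -/
theorem stmt_16 (n : ℕ) (hn : 1 ≤ n) (α : ℝ) (hα : α ∈ Ioo (0 : ℝ) 1)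
    (A : EuclideanSpace ℝ (Fin n) × EuclideanSpace ℝ (Fin n) → ℝ)
    (hA : ∀ q : EuclideanSpace ℝ (Fin n) × EuclideanSpace ℝ (Fin n), q ≠ 0 →
      A q = Real.sin (|Real.log (‖q.1‖ + ‖q.2‖)| ^ α) + 2)
    (hA0 : A 0 = 0) :
    (∀ δ : ℝ, 0 < δ → ∃ R : ℝ, 0 < R ∧
      ∀ ρ : ℝ, 0 < ρ → ρ ≤ R →
      ∀ x0 y0 : EuclideanSpace ℝ (Fin n),
        x0 ∈ ball (0 : EuclideanSpace ℝ (Fin n)) R →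
        y0 ∈ ball (0 : EuclideanSpace ℝ (Fin n)) R →
        ball x0 ρ ⊆ ball (0 : EuclideanSpace ℝ (Fin n)) R →
        ball y0 ρ ⊆ ball (0 : EuclideanSpace ℝ (Fin n)) R →
        (⨍ q in ball x0 ρ ×ˢ ball y0 ρ,
            |A q - ⨍ q' in ball x0 ρ ×ˢ ball y0 ρ, A q'|) ≤ δ) ∧
    ¬ ContinuousAt A 0 := by
  have : NeZero n := ⟨by omega⟩
  have hAf : A =ᵐ[volume.prod volume] fun q => sinLogProfile α (‖q.1‖ + ‖q.2‖) := by
    filter_upwards [compl_mem_ae_iff.2 (measure_singleton 0)] with q hq using hA q hq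
  refine ⟨fun δ hδ => ?_, fun hcont => ?_⟩
  · obtain ⟨R, hR, hosc⟩ :=
      exists_forall_setAverage_abs_sub_setAverage_le volume hα.1.le hα.2 hAf hδ
    refine ⟨R, hR, fun ρ hρ hρR x0 y0 hx0 hy0 _ _ => ?_⟩
    rw [Measure.volume_eq_prod]
    exact hosc ρ hρ hρR x0 y0 (mem_ball_zero_iff.1 hx0) (mem_ball_zero_iff.1 hy0)
  · have hge : (1 : ℝ) ≤ A 0 :=
      ge_of_tendsto (hcont.tendsto.mono_left nhdsWithin_le_nhds) <|
        eventually_nhdsWithin_of_forall (s := {0}ᶜ) fun q hq =>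
          (hA q hq).symm ▸ (sinLogProfile_mem_Icc α _).1
    rw [hA0] at hge
    norm_num at hge
end
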